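/- Let $\delta_0, \gamma > 0$. Then $\lim_{\rho \to 1^-} \int_{-\delta_0}^{\delta_0} \frac{e^{-ita}}{1 - \rho(1 + i\gamma t)}\, dt = \frac{1}{\gamma}\left(\pi + \int_{-a\delta_0}^{a\delta_0} \frac{\sin t}{t}\, dt\right)$ for every real $a$. -/

import Mathlib

open MeasureTheory Filter intervalIntegral

lemma aux_abs_exp (x : ℝ) : ‖Complex.exp (↑x * Complex.I) - 1‖ ≤ |x| := by
  have h : Complex.exp (↑x * Complex.I) - 1
      = ↑(Real.cos x - 1) + ↑(Real.sin x) * Complex.I := by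
    rw [Complex.exp_mul_I, ← Complex.ofReal_cos, ← Complex.ofReal_sin]
    push_cast; ring
  rw [h, Complex.norm_add_mul_I]
  have h1 : 1 - x ^ 2 / 2 ≤ Real.cos x := Real.one_sub_sq_div_two_le_cos
  have h2 : Real.sin x ^ 2 + Real.cos x ^ 2 = 1 := Real.sin_sq_add_cos_sq x
  have h3 : (Real.cos x - 1) ^ 2 + Real.sin x ^ 2 ≤ x ^ 2 := by
    nlinarith [Real.cos_le_one x]
  calc Real.sqrt ((Real.cos x - 1) ^ 2 + Real.sin x ^ 2) ≤ Real.sqrt (x ^ 2) :=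
        Real.sqrt_le_sqrt h3
    _ = |x| := Real.sqrt_sq_eq_abs x

lemma aux_abs_cos (u : ℝ) : |Real.cos u - 1| ≤ |u| := by
  have h1 : Real.cos (u/2) ^ 2 = 1/2 + Real.cos u / 2 := by
    have := Real.cos_sq (u/2); rwa [show 2*(u/2) = u by ring] at this
  have h2 : Real.sin (u/2) ^ 2 + Real.cos (u/2) ^ 2 = 1 := Real.sin_sq_add_cos_sq (u/2)
  have h3 : |Real.sin (u/2)| ≤ |u/2| := Real.abs_sin_le_abs
  have h4 : Real.cos u ≤ 1 := Real.cos_le_one u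
  have h5 : Real.sin (u/2) ^ 2 ≤ |Real.sin (u/2)| := by
    nlinarith [Real.sin_le_one (u/2), Real.neg_one_le_sin (u/2), sq_abs (Real.sin (u/2)),
      abs_nonneg (Real.sin (u/2))]
  have h6 : |u/2| = |u| / 2 := by rw [abs_div]; simp
  rw [abs_of_nonpos (by linarith)]
  nlinarith

lemma aux_integral_odd {c : ℝ} {h : ℝ → ℝ} (hodd : ∀ t, h (-t) = -h t) :
    ∫ t in (-c)..c, h t = 0 := by
  have h1 : (∫ t in (-c)..c, h (-t)) = ∫ t in (-c)..c, h t := by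
    simpa using intervalIntegral.integral_comp_neg (a := -c) (b := c) h
  have h2 : (∫ t in (-c)..c, h (-t)) = -∫ t in (-c)..c, h t := by
    simp only [hodd]; exact intervalIntegral.integral_neg
  linarith

lemma aux_integral_split {c : ℝ} {g h : ℝ → ℝ}
    (hg : IntervalIntegrable g volume (-c) c) (hh : IntervalIntegrable h volume (-c) c) :
    (∫ t in (-c)..c, (↑(g t) + ↑(h t) * Complex.I)) =
      ↑(∫ t in (-c)..c, g t) + ↑(∫ t in (-c)..c, h t) * Complex.I := by
  have hg' : IntervalIntegrable (fun t => (g t : ℂ)) volume (-c) c := by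
    rw [intervalIntegrable_iff] at hg ⊢; exact hg.ofReal
  have hh' : IntervalIntegrable (fun t => (h t : ℂ) * Complex.I) volume (-c) c := by
    rw [intervalIntegrable_iff] at hh ⊢; exact hh.ofReal.mul_const _
  rw [intervalIntegral.integral_add hg' hh', intervalIntegral.integral_mul_const,
    intervalIntegral.integral_ofReal, intervalIntegral.integral_ofReal]

lemma aux_denom_ne (ε b t : ℝ) (hε : ε ≠ 0) : ((ε : ℂ) - Complex.I * ↑b * ↑t) ≠ 0 := by
  intro H
  apply hε
  simpa using congrArg Complex.re H

lemma aux_one_div_split (ε b : ℝ) (hε : 0 < ε) (t : ℝ) :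
    (1 : ℂ) / ((ε : ℂ) - Complex.I * ↑b * ↑t) =
      ↑(ε / (ε^2 + b^2*t^2)) + ↑(b*t / (ε^2 + b^2*t^2)) * Complex.I := by
  have hd : (ε^2 + b^2*t^2) ≠ 0 := by positivity
  have hz := aux_denom_ne ε b t hε.ne'
  rw [div_eq_iff hz]
  have hd' : ((ε:ℂ)^2 + (b:ℂ)^2*(t:ℂ)^2) ≠ 0 := by exact_mod_cast Complex.ofReal_ne_zero.2 hd
  push_cast
  field_simp
  linear_combination ((b:ℂ)^2*(t:ℂ)^2) * Complex.I_sq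

lemma aux_flim_eq (γ a t : ℝ) (hγ : γ ≠ 0) (ht : t ≠ 0) :
    (Complex.exp (-Complex.I * ↑t * ↑a) - 1) / (-(Complex.I * ↑γ * ↑t)) =
      ↑(Real.sin (a*t) / (γ*t)) + ↑((Real.cos (a*t) - 1) / (γ*t)) * Complex.I := by
  have hz : (-(Complex.I * ↑γ * ↑t)) ≠ 0 := by
    simp [Complex.I_ne_zero, Complex.ofReal_ne_zero.2 hγ, Complex.ofReal_ne_zero.2 ht]
  have hexp : Complex.exp (-Complex.I * ↑t * ↑a)
      = ↑(Real.cos (a*t)) - ↑(Real.sin (a*t)) * Complex.I := by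
    have h1 : -Complex.I * ↑t * ↑a = ↑(-(a*t)) * Complex.I := by push_cast; ring
    rw [h1, Complex.exp_mul_I, ← Complex.ofReal_cos, ← Complex.ofReal_sin,
      Real.cos_neg, Real.sin_neg]
    push_cast; ring
  rw [hexp, div_eq_iff hz]
  have hγt : (γ*t) ≠ 0 := mul_ne_zero hγ ht
  push_cast
  generalize Complex.cos (↑a * ↑t) = c
  generalize Complex.sin (↑a * ↑t) = s
  have hγ' : (γ:ℂ) ≠ 0 := Complex.ofReal_ne_zero.2 hγ
  have ht' : (t:ℂ) ≠ 0 := Complex.ofReal_ne_zero.2 ht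
  field_simp
  linear_combination (c - 1) * Complex.I_sq

lemma aux_stepB (δ0 : ℝ) (ε b : ℝ) (hε : 0 < ε) (hb : 0 < b) :
    (∫ t in (-δ0)..δ0, 1 / ((ε:ℂ) - Complex.I * ↑b * ↑t)) =
      ((2 / b * Real.arctan (b * δ0 / ε) : ℝ) : ℂ) := by
  have h1 : (∫ t in (-δ0)..δ0, 1 / ((ε:ℂ) - Complex.I * ↑b * ↑t))
      = ∫ t in (-δ0)..δ0,
          ((↑(ε/(ε^2+b^2*t^2)) + ↑(b*t/(ε^2+b^2*t^2)) * Complex.I : ℂ)) :=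
    intervalIntegral.integral_congr fun t _ => aux_one_div_split ε b hε t
  have hpc : Continuous fun t : ℝ => ε/(ε^2+b^2*t^2) :=
    continuous_const.div (by continuity) (fun t => by positivity)
  have hqc : Continuous fun t : ℝ => b*t/(ε^2+b^2*t^2) :=
    Continuous.div (by continuity) (by continuity) (fun t => by positivity)
  rw [h1, aux_integral_split (hpc.intervalIntegrable _ _) (hqc.intervalIntegrable _ _)]
  have hq0 : (∫ t in (-δ0)..δ0, b*t/(ε^2+b^2*t^2)) = 0 :=
    aux_integral_odd fun t => by rw [mul_neg, neg_sq, neg_div]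
  have hp : (∫ t in (-δ0)..δ0, ε/(ε^2+b^2*t^2)) = 2 / b * Real.arctan (b * δ0 / ε) := by
    have e1 : ∀ t : ℝ, ε/(ε^2+b^2*t^2) = (1/ε) * ((fun u : ℝ => 1/(1+u^2)) ((b/ε)*t)) := by
      intro t; simp only; field_simp
    rw [intervalIntegral.integral_congr (g := fun t => (1/ε) * ((fun u : ℝ => 1/(1+u^2)) ((b/ε)*t)))
        (fun t _ => e1 t),
      intervalIntegral.integral_const_mul,
      intervalIntegral.integral_comp_mul_left (fun u : ℝ => 1/(1+u^2))
        (show b/ε ≠ 0 from (by positivity : (0:ℝ) < b/ε).ne'),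
      integral_one_div_one_add_sq, smul_eq_mul, mul_neg, Real.arctan_neg,
      show (b/ε)*δ0 = b*δ0/ε by ring]
    field_simp
    ring
  rw [hp, hq0]
  push_cast
  ring

lemma aux_partA (δ0 γ : ℝ) (hδ0 : 0 < δ0) (hγ : 0 < γ) (a : ℝ) :
    Tendsto (fun ρ : ℝ => ∫ t in (-δ0)..δ0,
        (Complex.exp (-Complex.I * ↑t * ↑a) - 1) /
          (((1-ρ : ℝ) : ℂ) - Complex.I * ((ρ*γ : ℝ) : ℂ) * (t:ℂ)))
      (nhdsWithin 1 (Set.Iio 1))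
      (nhds ((((∫ u in (-(a*δ0))..(a*δ0), Real.sin u / u) / γ : ℝ)) : ℂ)) := by
  set g : ℝ → ℝ := fun t => Real.sin (a*t)/(γ*t) with hgdef
  set h : ℝ → ℝ := fun t => (Real.cos (a*t)-1)/(γ*t) with hhdef
  -- measurability
  have meas_g : AEStronglyMeasurable g volume :=
    ((Real.measurable_sin.comp (measurable_const.mul measurable_id)).div
      (measurable_const.mul measurable_id)).aestronglyMeasurable
  have meas_h : AEStronglyMeasurable h volume :=
    (((Real.measurable_cos.comp (measurable_const.mul measurable_id)).sub measurable_const).div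
      (measurable_const.mul measurable_id)).aestronglyMeasurable
  -- bounds
  have bd_g : ∀ x : ℝ, |g x| ≤ |a|/γ := by
    intro x
    by_cases hx : x = 0
    · simp [hgdef, hx]; positivity
    · have h1 : |Real.sin (a*x)| ≤ |a| * |x| := by
        simpa [abs_mul] using Real.abs_sin_le_abs (x := a*x)
      simp only [hgdef]
      rw [abs_div, abs_mul, abs_of_pos hγ, div_le_div_iff₀ (by positivity) hγ]
      nlinarith [abs_pos.2 hx, abs_nonneg a, abs_nonneg (Real.sin (a*x))]
  have bd_h : ∀ x : ℝ, |h x| ≤ |a|/γ := by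
    intro x
    by_cases hx : x = 0
    · simp [hhdef, hx]; positivity
    · have h1 : |Real.cos (a*x) - 1| ≤ |a| * |x| := by
        simpa [abs_mul] using aux_abs_cos (a*x)
      simp only [hhdef]
      rw [abs_div, abs_mul, abs_of_pos hγ, div_le_div_iff₀ (by positivity) hγ]
      nlinarith [abs_pos.2 hx, abs_nonneg a, abs_nonneg (Real.cos (a*x) - 1)]
  -- integrability
  have hmeasIoc : volume (Set.uIoc (-δ0) δ0) ≠ ⊤ := by
    rw [Set.uIoc]; exact measure_Ioc_lt_top.ne
  have hgi : IntervalIntegrable g volume (-δ0) δ0 := by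
    rw [intervalIntegrable_iff]
    exact Measure.integrableOn_of_bounded hmeasIoc meas_g (Eventually.of_forall fun x => bd_g x)
  have hhi : IntervalIntegrable h volume (-δ0) δ0 := by
    rw [intervalIntegrable_iff]
    exact Measure.integrableOn_of_bounded hmeasIoc meas_h (Eventually.of_forall fun x => bd_h x)
  -- value of the limit integral
  have hIf : (∫ t in (-δ0)..δ0, ((g t : ℂ) + (h t : ℂ) * Complex.I))
      = ↑((∫ u in (-(a*δ0))..(a*δ0), Real.sin u / u) / γ) := by
    rw [aux_integral_split hgi hhi]
    have h0 : (∫ t in (-δ0)..δ0, h t) = 0 := by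
      apply aux_integral_odd
      intro t
      simp only [hhdef]
      rw [mul_neg, Real.cos_neg, mul_neg, div_neg]
    have hg' : (∫ t in (-δ0)..δ0, g t)
        = (∫ u in (-(a*δ0))..(a*δ0), Real.sin u / u) / γ := by
      by_cases ha : a = 0
      · simp [hgdef, ha]
      · set sinc : ℝ → ℝ := fun u => Real.sin u / u with hsinc
        have e : ∀ t : ℝ, g t = (a/γ) * sinc (a*t) := by
          intro t
          by_cases ht : t = 0
          · simp [hgdef, hsinc, ht]
          · simp only [hgdef, hsinc]
            field_simp
        have h2 : (∫ x in (-δ0)..δ0, sinc (a*x))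
            = a⁻¹ • ∫ u in (a*(-δ0))..(a*δ0), sinc u :=
          intervalIntegral.integral_comp_mul_left sinc ha
        rw [intervalIntegral.integral_congr (fun t _ => e t),
          intervalIntegral.integral_const_mul, h2, smul_eq_mul, mul_neg]
        field_simp
    rw [h0, hg']
    push_cast
    ring
  rw [← hIf]
  apply intervalIntegral.tendsto_integral_filter_of_dominated_convergence
    (bound := fun _ => 2*|a|/γ)
  · -- measurability
    filter_upwards [self_mem_nhdsWithin] with ρ hρ
    have hρ' : ρ < 1 := hρ
    have hε : (1-ρ) ≠ 0 := sub_ne_zero.2 (ne_of_lt hρ').symm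
    apply Continuous.aestronglyMeasurable
    apply Continuous.div
    · exact (Complex.continuous_exp.comp
        (((continuous_const.mul Complex.continuous_ofReal).mul continuous_const))).sub
        continuous_const
    · exact continuous_const.sub ((continuous_const.mul continuous_const).mul
        Complex.continuous_ofReal)
    · exact fun t => aux_denom_ne _ _ _ hε
  · -- bound
    filter_upwards [Ioo_mem_nhdsLT_of_mem (show (1:ℝ) ∈ Set.Ioc (1/2 : ℝ) 1 by norm_num)]
      with ρ hρ
    refine Eventually.of_forall fun x _ => ?_
    by_cases hx : x = 0
    · simp [hx]
      positivity
    · rw [norm_div]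
      have hnum : ‖Complex.exp (-Complex.I * ↑x * ↑a) - 1‖ ≤ |x| * |a| := by
        have he : -Complex.I * (x:ℂ) * (a:ℂ) = ((-(x*a) : ℝ) : ℂ) * Complex.I := by
          push_cast; ring
        rw [he]
        calc ‖Complex.exp (↑(-(x*a)) * Complex.I) - 1‖ ≤ |(-(x*a))| :=
              aux_abs_exp _
          _ = |x| * |a| := by rw [abs_neg, abs_mul]
      have hρpos : (0:ℝ) < ρ := lt_trans (by norm_num) hρ.1
      have hden : (ρ*γ) * |x| ≤ ‖((1-ρ : ℝ) : ℂ) - Complex.I * ((ρ*γ : ℝ) : ℂ) * (x:ℂ)‖ := by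
        have him : (((1-ρ : ℝ) : ℂ) - Complex.I * ((ρ*γ : ℝ) : ℂ) * (x:ℂ)).im = -((ρ*γ)*x) := by
          simp
        calc (ρ*γ) * |x| = |(-((ρ*γ)*x))| := by
              rw [abs_neg, abs_mul, abs_of_pos (mul_pos hρpos hγ)]
          _ = |(((1-ρ : ℝ) : ℂ) - Complex.I * ((ρ*γ : ℝ) : ℂ) * (x:ℂ)).im| := by rw [him]
          _ ≤ _ := Complex.abs_im_le_norm _
      calc ‖Complex.exp (-Complex.I * ↑x * ↑a) - 1‖ /
            ‖((1-ρ : ℝ) : ℂ) - Complex.I * ((ρ*γ : ℝ) : ℂ) * (x:ℂ)‖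
          ≤ (|x| * |a|) / ((ρ*γ) * |x|) := by
            apply div_le_div₀ (by positivity) hnum (by positivity) hden
        _ ≤ 2*|a|/γ := by
            rw [div_le_div_iff₀ (by positivity) hγ]
            nlinarith [mul_nonneg (mul_nonneg (mul_nonneg (abs_nonneg a) hγ.le) (abs_nonneg x))
              (by linarith [hρ.1] : (0:ℝ) ≤ 2*ρ-1)]
  · exact intervalIntegrable_const
  · -- pointwise limit
    have hae : ∀ᵐ x : ℝ, x ≠ 0 := by
      rw [MeasureTheory.ae_iff]
      have : {x : ℝ | ¬ x ≠ 0} = {0} := by ext y; simp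
      rw [this]
      exact measure_singleton 0
    filter_upwards [hae] with x hx _
    have hfx : ((g x : ℂ) + (h x : ℂ) * Complex.I)
        = (Complex.exp (-Complex.I*(x:ℂ)*(a:ℂ)) - 1) / (-(Complex.I*(γ:ℝ)*(x:ℂ))) :=
      (aux_flim_eq γ a x hγ.ne' hx).symm
    rw [hfx]
    apply Tendsto.div tendsto_const_nhds
    · have hc : Continuous fun ρ : ℝ =>
          (((1-ρ : ℝ) : ℂ) - Complex.I * ((ρ*γ : ℝ) : ℂ) * (x:ℂ)) := by
        apply Continuous.sub
        · exact Complex.continuous_ofReal.comp (continuous_const.sub continuous_id)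
        · exact (continuous_const.mul
            (Complex.continuous_ofReal.comp (continuous_id.mul continuous_const))).mul
            continuous_const
      have := (hc.tendsto 1).mono_left (nhdsWithin_le_nhds (s := Set.Iio (1:ℝ)))
      convert this using 2
      push_cast
      ring
    · intro H
      rw [neg_eq_zero] at H
      have := mul_ne_zero (mul_ne_zero Complex.I_ne_zero (Complex.ofReal_ne_zero.2 hγ.ne'))
        (Complex.ofReal_ne_zero.2 hx)
      exact this H

lemma aux_partB (δ0 γ : ℝ) (hδ0 : 0 < δ0) (hγ : 0 < γ) :
    Tendsto (fun ρ : ℝ => ((2/(ρ*γ) * Real.arctan (ρ*γ*δ0/(1-ρ)) : ℝ) : ℂ))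
      (nhdsWithin 1 (Set.Iio 1)) (nhds (((Real.pi/γ : ℝ) : ℂ))) := by
  have hreal : Tendsto (fun ρ : ℝ => 2/(ρ*γ) * Real.arctan (ρ*γ*δ0/(1-ρ)))
      (nhdsWithin 1 (Set.Iio 1)) (nhds (Real.pi/γ)) := by
    have hA : Tendsto (fun ρ : ℝ => 2/(ρ*γ)) (nhdsWithin 1 (Set.Iio 1)) (nhds (2/γ)) := by
      have hc : ContinuousAt (fun ρ : ℝ => 2/(ρ*γ)) 1 := by
        apply ContinuousAt.div continuousAt_const (continuousAt_id.mul continuousAt_const)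
        simp [hγ.ne']
      have := hc.tendsto.mono_left (nhdsWithin_le_nhds (s := Set.Iio (1:ℝ)))
      simpa using this
    have hinner : Tendsto (fun ρ : ℝ => ρ*γ*δ0 * (1-ρ)⁻¹) (nhdsWithin 1 (Set.Iio 1)) atTop := by
      apply Filter.Tendsto.pos_mul_atTop (show (0:ℝ) < γ*δ0 by positivity)
      · have hc : ContinuousAt (fun ρ : ℝ => ρ*γ*δ0) 1 := by fun_prop
        have := hc.tendsto.mono_left (nhdsWithin_le_nhds (s := Set.Iio (1:ℝ)))
        simpa using this
      · have h0 : Tendsto (fun ρ : ℝ => 1-ρ) (nhdsWithin 1 (Set.Iio 1))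
            (nhdsWithin 0 (Set.Ioi 0)) := by
          rw [tendsto_nhdsWithin_iff]
          constructor
          · have hc : ContinuousAt (fun ρ:ℝ => 1-ρ) 1 := by fun_prop
            simpa using hc.tendsto.mono_left (nhdsWithin_le_nhds (s := Set.Iio (1:ℝ)))
          · filter_upwards [self_mem_nhdsWithin] with ρ hρ
            exact Set.mem_Ioi.2 (sub_pos.2 (Set.mem_Iio.1 hρ))
        exact tendsto_inv_nhdsGT_zero.comp h0
    have harct : Tendsto (fun ρ : ℝ => Real.arctan (ρ*γ*δ0/(1-ρ)))
        (nhdsWithin 1 (Set.Iio 1)) (nhds (Real.pi/2)) := by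
      have := (Real.tendsto_arctan_atTop.mono_right (nhdsWithin_le_nhds (s := Set.Iio (Real.pi/2)))).comp hinner
      simpa [Function.comp_def, div_eq_mul_inv] using this
    have hmul := hA.mul harct
    rw [show 2/γ * (Real.pi/2) = Real.pi/γ from by ring] at hmul
    exact hmul
  exact (Complex.continuous_ofReal.tendsto _).comp hreal

theorem stmt2 (δ0 γ : ℝ) (hδ0 : 0 < δ0) (hγ : 0 < γ) (a : ℝ) :
    Tendsto (fun ρ : ℝ => ∫ t in (-δ0)..δ0,
        Complex.exp (-Complex.I * t * a) / (1 - (ρ : ℂ) * (1 + Complex.I * γ * t)))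
      (nhdsWithin 1 (Set.Iio 1))
      (nhds (((Real.pi + ∫ t in (-(a * δ0))..(a * δ0), Real.sin t / t) / γ : ℝ) : ℂ)) := by
  have hA := aux_partA δ0 γ hδ0 hγ a
  have hB := aux_partB δ0 γ hδ0 hγ
  have hsum := hA.add hB
  have htarget : (((Real.pi + ∫ t in (-(a * δ0))..(a * δ0), Real.sin t / t) / γ : ℝ) : ℂ)
      = ↑((∫ u in (-(a*δ0))..(a*δ0), Real.sin u / u) / γ) + ↑((Real.pi/γ : ℝ)) := by
    push_cast; ring
  rw [htarget]
  refine Tendsto.congr' ?_ hsum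
  filter_upwards [Ioo_mem_nhdsLT_of_mem (show (1:ℝ) ∈ Set.Ioc (0:ℝ) 1 by norm_num)] with ρ hρ
  have hε : 0 < 1-ρ := by linarith [hρ.2]
  have hb : 0 < ρ*γ := mul_pos hρ.1 hγ
  have hpt : ∀ t : ℝ, Complex.exp (-Complex.I * ↑t * ↑a) / (1 - (ρ:ℂ) * (1 + Complex.I * ↑γ * ↑t))
      = (Complex.exp (-Complex.I * ↑t * ↑a) - 1) / (((1-ρ:ℝ):ℂ) - Complex.I * ((ρ*γ:ℝ):ℂ) * ↑t)
        + 1 / (((1-ρ:ℝ):ℂ) - Complex.I * ((ρ*γ:ℝ):ℂ) * ↑t) := by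
    intro t
    have hden : (1 - (ρ:ℂ) * (1 + Complex.I * ↑γ * ↑t))
        = (((1-ρ:ℝ):ℂ) - Complex.I * ((ρ*γ:ℝ):ℂ) * ↑t) := by push_cast; ring
    rw [hden, ← add_div, sub_add_cancel]
  have hdc : Continuous fun t : ℝ => (((1-ρ:ℝ):ℂ) - Complex.I * ((ρ*γ:ℝ):ℂ) * (t:ℂ)) :=
    continuous_const.sub ((continuous_const.mul continuous_const).mul Complex.continuous_ofReal)
  have hFi : IntervalIntegrable (fun t : ℝ => (Complex.exp (-Complex.I * ↑t * ↑a) - 1) /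
      (((1-ρ:ℝ):ℂ) - Complex.I * ((ρ*γ:ℝ):ℂ) * ↑t)) volume (-δ0) δ0 := by
    apply Continuous.intervalIntegrable
    exact Continuous.div
      ((Complex.continuous_exp.comp ((continuous_const.mul Complex.continuous_ofReal).mul
        continuous_const)).sub continuous_const)
      hdc (fun t => aux_denom_ne _ _ _ hε.ne')
  have hGi : IntervalIntegrable (fun t : ℝ => 1 /
      (((1-ρ:ℝ):ℂ) - Complex.I * ((ρ*γ:ℝ):ℂ) * ↑t)) volume (-δ0) δ0 := by
    apply Continuous.intervalIntegrable
    exact Continuous.div continuous_const hdc (fun t => aux_denom_ne _ _ _ hε.ne')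
  have hsplit : (∫ t in (-δ0)..δ0,
        Complex.exp (-Complex.I * ↑t * ↑a) / (1 - (ρ:ℂ) * (1 + Complex.I * ↑γ * ↑t)))
      = (∫ t in (-δ0)..δ0, (Complex.exp (-Complex.I * ↑t * ↑a) - 1) /
          (((1-ρ:ℝ):ℂ) - Complex.I * ((ρ*γ:ℝ):ℂ) * ↑t))
        + ∫ t in (-δ0)..δ0, 1 / (((1-ρ:ℝ):ℂ) - Complex.I * ((ρ*γ:ℝ):ℂ) * ↑t) := by
    rw [intervalIntegral.integral_congr (fun t _ => hpt t),
      intervalIntegral.integral_add hFi hGi]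
  rw [hsplit, aux_stepB δ0 (1-ρ) (ρ*γ) hε hb]
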